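/- arXiv:2603.01093 — 2 statements merged into one kernel-verified Lean document; each statement's English description precedes it below -/
import Mathlib

section
/- Let V be a real vector space equipped with two seminorms ‖·‖₀ and ‖·‖₁, let Y and Z be real normed spaces, let 𝒢 : V → Y and ℬ : V → Z be linear maps, and let C_L, C_U > 0 be constants such that C_L ‖φ‖₀² ≤ ‖𝒢φ‖_Y² + ‖ℬφ‖_Z² ≤ C_U ‖φ‖₁² for all φ ∈ V. Let φ* ∈ V, set g := ℬφ*, and assume 𝒢φ* = 0. Define the loss ℒ(φ) := ‖𝒢φ‖_Y² + ‖ℬφ − g‖_Z². Then for any φ_ρ, φ_a ∈ V, any function ℒ̃ : V → ℝ, and any ε ≥ 0 with |ℒ(φ) − ℒ̃(φ)| ≤ ε for φ ∈ {φ_ρ, φ_a}, one has C_L ‖φ* − φ_ρ‖₀² ≤ C_U ‖φ* − φ_a‖₁² + 2ε + (ℒ̃(φ_ρ) − ℒ̃(φ_a)). -/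
/-! Since `𝒢φ* = 0`, the loss is the graph energy `‖𝒢ψ‖² + ‖ℬψ‖²` of the error `ψ = φ* − φ`.
The lower graph-norm bound at `φ_ρ` and the upper one at `φ_a` therefore sandwich the losses,
and passing from `ℒ` to `ℒ̃` at the two points costs `ε` each. -/

section GraphEnergy

variable {V Y Z : Type*} [AddCommGroup V] [Module ℝ V]
  [SeminormedAddCommGroup Y] [Module ℝ Y] [SeminormedAddCommGroup Z] [Module ℝ Z]
  (G : V →ₗ[ℝ] Y) (B : V →ₗ[ℝ] Z)

def graphEnergy (φ : V) : ℝ := ‖G φ‖ ^ 2 + ‖B φ‖ ^ 2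

def residualLoss (g : Z) (φ : V) : ℝ := ‖G φ‖ ^ 2 + ‖B φ - g‖ ^ 2

theorem residualLoss_eq_graphEnergy_sub {φs : V} (hGφs : G φs = 0) (φ : V) :
    residualLoss G B (B φs) φ = graphEnergy G B (φs - φ) := by
  rw [residualLoss, graphEnergy, map_sub, map_sub, hGφs, zero_sub, norm_neg, norm_sub_rev]

end GraphEnergy

theorem le_add_two_mul_add_sub_of_abs_sub_le {a b L₁ L₂ l₁ l₂ ε : ℝ}
    (hlower : a ≤ L₁) (hupper : L₂ ≤ b) (h₁ : |L₁ - l₁| ≤ ε) (h₂ : |L₂ - l₂| ≤ ε) :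
    a ≤ b + 2 * ε + (l₁ - l₂) := by
  linarith [(abs_le.mp h₁).2, (abs_le.mp h₂).1]

theorem statement_6_general {V Y Z : Type*} [AddCommGroup V] [Module ℝ V]
    [NormedAddCommGroup Y] [NormedSpace ℝ Y] [NormedAddCommGroup Z] [NormedSpace ℝ Z]
    (n₀ n₁ : Seminorm ℝ V)
    (G : V →ₗ[ℝ] Y) (B : V →ₗ[ℝ] Z)
    (CL CU : ℝ)
    (hgraph : ∀ φ : V,
      CL * (n₀ φ) ^ 2 ≤ ‖G φ‖ ^ 2 + ‖B φ‖ ^ 2 ∧ ‖G φ‖ ^ 2 + ‖B φ‖ ^ 2 ≤ CU * (n₁ φ) ^ 2)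
    (φs : V) (hGφs : G φs = 0)
    (φρ φa : V) (Lt : V → ℝ) (ε : ℝ)
    (hρ : |(‖G φρ‖ ^ 2 + ‖B φρ - B φs‖ ^ 2) - Lt φρ| ≤ ε)
    (ha : |(‖G φa‖ ^ 2 + ‖B φa - B φs‖ ^ 2) - Lt φa| ≤ ε) :
    CL * (n₀ (φs - φρ)) ^ 2 ≤ CU * (n₁ (φs - φa)) ^ 2 + 2 * ε + (Lt φρ - Lt φa) := by
  have hlower : CL * n₀ (φs - φρ) ^ 2 ≤ residualLoss G B (B φs) φρ :=
    residualLoss_eq_graphEnergy_sub G B hGφs φρ ▸ (hgraph (φs - φρ)).1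
  have hupper : residualLoss G B (B φs) φa ≤ CU * n₁ (φs - φa) ^ 2 :=
    residualLoss_eq_graphEnergy_sub G B hGφs φa ▸ (hgraph (φs - φa)).2
  exact le_add_two_mul_add_sub_of_abs_sub_le hlower hupper hρ ha

/-- Abstract error decomposition for the randomized neural network approximation under a
graph-norm equivalence: if `C_L ‖φ‖₀² ≤ ‖𝒢φ‖² + ‖ℬφ‖² ≤ C_U ‖φ‖₁²` for all `φ`, the
exact solution `φ*` satisfies `𝒢φ* = 0` with boundary data `g = ℬφ*`, and the empirical
loss `ℒ̃` deviates from the exact loss `ℒ(φ) = ‖𝒢φ‖² + ‖ℬφ − g‖²` by at most `ε` at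
`φ_ρ` and `φ_a`, then
`C_L ‖φ* − φ_ρ‖₀² ≤ C_U ‖φ* − φ_a‖₁² + 2ε + (ℒ̃(φ_ρ) − ℒ̃(φ_a))`. -/
theorem statement_6 {V Y Z : Type*} [AddCommGroup V] [Module ℝ V]
    [NormedAddCommGroup Y] [NormedSpace ℝ Y] [NormedAddCommGroup Z] [NormedSpace ℝ Z]
    (n₀ n₁ : Seminorm ℝ V)
    (G : V →ₗ[ℝ] Y) (B : V →ₗ[ℝ] Z)
    (CL CU : ℝ) (hCL : 0 < CL) (hCU : 0 < CU)
    (hgraph : ∀ φ : V,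
      CL * (n₀ φ) ^ 2 ≤ ‖G φ‖ ^ 2 + ‖B φ‖ ^ 2 ∧ ‖G φ‖ ^ 2 + ‖B φ‖ ^ 2 ≤ CU * (n₁ φ) ^ 2)
    (φs : V) (hGφs : G φs = 0)
    (φρ φa : V) (Lt : V → ℝ) (ε : ℝ) (hε : 0 ≤ ε)
    (hρ : |(‖G φρ‖ ^ 2 + ‖B φρ - B φs‖ ^ 2) - Lt φρ| ≤ ε)
    (ha : |(‖G φa‖ ^ 2 + ‖B φa - B φs‖ ^ 2) - Lt φa| ≤ ε) :
    CL * (n₀ (φs - φρ)) ^ 2 ≤ CU * (n₁ (φs - φa)) ^ 2 + 2 * ε + (Lt φρ - Lt φa) :=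
  statement_6_general n₀ n₁ G B CL CU hgraph φs hGφs φρ φa Lt ε hρ ha
end

section
/- Let F : ℝ → ℝ^d be continuous, q : ℝ^d × ℝ → ℝ, u₀ : ℝ^d → ℝ, and T > 0. Let u : ℝ × ℝ^d → ℝ be differentiable on an open set U containing [0,T] × ℝ^d (or containing the curve below), satisfy ∂_t u + F(u) · ∇_x u + q(x,u) = 0 on U, and u(0,·) = u₀. Let φ : ℝ × ℝ^d × ℝ → ℝ be differentiable and satisfy the level-set transport equation ∂_t φ(t,x,z) + F(z) · ∇_x φ(t,x,z) − q(x,z) ∂_z φ(t,x,z) = 0 everywhere, with initial data φ(0,x,z) = z − u₀(x). Let x : [0,T] → ℝ^d be differentiable with x'(t) = F(u(t, x(t))). Then φ(t, x(t), u(t, x(t))) = 0 for all t ∈ [0,T]. -/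
open MeasureTheory Set RealInnerProductSpace

/-!
Along a characteristic `x' = F(u)`, the classical solution gives `z(t) = u(t, x(t))` with
`z' = ∂_t u + F(u) · ∇_x u = -q(x, z)`. Hence `(t, x(t), z(t))` moves with velocity
`(1, F(z), -q(x, z))`, which is exactly the direction annihilated by `dφ` in the level-set
equation, so `φ` is constant along this curve and equals its initial value
`z(0) - u₀(x(0)) = 0`.
-/

section PartialDerivatives

variable {E : Type*} [NormedAddCommGroup E] [InnerProductSpace ℝ E] [CompleteSpace E]

theorem inner_gradient_comp {F : Type*} [NormedAddCommGroup F] [NormedSpace ℝ F]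
    {f : F → ℝ} {g : E → F} {L : E →L[ℝ] F} {y : E}
    (hf : DifferentiableAt ℝ f (g y)) (hg : HasFDerivAt g L y) (v : E) :
    ⟪v, gradient (f ∘ g) y⟫ = fderiv ℝ f (g y) (L v) := by
  rw [inner_gradient_right, (hf.hasFDerivAt.comp y hg).fderiv]
  rfl

theorem fderiv_apply_one_eq_deriv_add_inner_gradient {f : ℝ × E → ℝ} {p : ℝ × E}
    (hf : DifferentiableAt ℝ f p) (v : E) :
    fderiv ℝ f p (1, v) =
      deriv (fun t => f (t, p.2)) p.1 + ⟪v, gradient (fun y => f (p.1, y)) p.2⟫ := by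
  have ht : deriv (fun t => f (t, p.2)) p.1 = fderiv ℝ f p (1, 0) :=
    (hf.hasFDerivAt.comp_hasDerivAt p.1 ((hasDerivAt_id _).prodMk (hasDerivAt_const _ _))).deriv
  have hy : ⟪v, gradient (fun y => f (p.1, y)) p.2⟫ = fderiv ℝ f p (0, v) :=
    inner_gradient_comp hf (hasFDerivAt_prodMk_right p.1 p.2) v
  rw [ht, hy, ← map_add, Prod.mk_add_mk, add_zero, zero_add]

theorem fderiv_apply_one_eq_deriv_add_inner_gradient_add_deriv {f : ℝ × E × ℝ → ℝ}
    {p : ℝ × E × ℝ} (hf : DifferentiableAt ℝ f p) (v : E) (c : ℝ) :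
    fderiv ℝ f p (1, v, c) =
      deriv (fun t => f (t, p.2.1, p.2.2)) p.1 +
        ⟪v, gradient (fun y => f (p.1, y, p.2.2)) p.2.1⟫ +
        c * deriv (fun z => f (p.1, p.2.1, z)) p.2.2 := by
  have ht : deriv (fun t => f (t, p.2.1, p.2.2)) p.1 = fderiv ℝ f p (1, 0, 0) :=
    (hf.hasFDerivAt.comp_hasDerivAt p.1 ((hasDerivAt_id _).prodMk
      ((hasDerivAt_const _ _).prodMk (hasDerivAt_const _ _)))).deriv
  have hy : ⟪v, gradient (fun y => f (p.1, y, p.2.2)) p.2.1⟫ = fderiv ℝ f p (0, v, 0) := by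
    refine (inner_gradient_comp (g := fun y => (p.1, y, p.2.2)) hf ((hasFDerivAt_const _ _).prodMk
      ((hasFDerivAt_id _).prodMk (hasFDerivAt_const _ _))) v).trans ?_
    simp
  have hz : deriv (fun z => f (p.1, p.2.1, z)) p.2.2 = fderiv ℝ f p (0, 0, 1) :=
    (hf.hasFDerivAt.comp_hasDerivAt p.2.2 ((hasDerivAt_const _ _).prodMk
      ((hasDerivAt_const _ _).prodMk (hasDerivAt_id _)))).deriv
  rw [ht, hy, hz, ← smul_eq_mul, ← map_smul, ← map_add, ← map_add]
  simp

end PartialDerivatives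

theorem eq_of_fderiv_apply_velocity_eq_zero {E : Type*} [NormedAddCommGroup E]
    [NormedSpace ℝ E] {Φ : E → ℝ} {γ γ' : ℝ → E} {a b : ℝ}
    (hΦ : ∀ t ∈ Icc a b, DifferentiableAt ℝ Φ (γ t))
    (hγ : ∀ t ∈ Icc a b, HasDerivAt γ (γ' t) t)
    (hzero : ∀ t ∈ Icc a b, fderiv ℝ Φ (γ t) (γ' t) = 0) :
    ∀ t ∈ Icc a b, Φ (γ t) = Φ (γ a) := by
  have hderiv : ∀ t ∈ Icc a b, HasDerivAt (Φ ∘ γ) 0 t := fun t ht => by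
    simpa only [hzero t ht] using (hΦ t ht).hasFDerivAt.comp_hasDerivAt t (hγ t ht)
  exact constant_of_has_deriv_right_zero
    (fun t ht => (hderiv t ht).continuousAt.continuousWithinAt)
    (fun t ht => (hderiv t (Ico_subset_Icc_self ht)).hasDerivWithinAt)

theorem statement_8_general {d : ℕ}
    (F : ℝ → EuclideanSpace ℝ (Fin d))
    (q : EuclideanSpace ℝ (Fin d) × ℝ → ℝ)
    (u₀ : EuclideanSpace ℝ (Fin d) → ℝ)
    (T : ℝ)
    (U : Set (ℝ × EuclideanSpace ℝ (Fin d))) (hU : IsOpen U)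
    (u : ℝ × EuclideanSpace ℝ (Fin d) → ℝ) (hu : DifferentiableOn ℝ u U)
    (hpde : ∀ X ∈ U,
      deriv (fun t => u (t, X.2)) X.1 +
        ⟪F (u X), gradient (fun y => u (X.1, y)) X.2⟫ + q (X.2, u X) = 0)
    (hinit : ∀ y : EuclideanSpace ℝ (Fin d), u (0, y) = u₀ y)
    (φ : ℝ × EuclideanSpace ℝ (Fin d) × ℝ → ℝ) (hφ : Differentiable ℝ φ)
    (hls : ∀ (t : ℝ) (y : EuclideanSpace ℝ (Fin d)) (z : ℝ),
      deriv (fun t' => φ (t', y, z)) t +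
          ⟪F z, gradient (fun y' => φ (t, y', z)) y⟫ -
        q (y, z) * deriv (fun z' => φ (t, y, z')) z = 0)
    (hφ0 : ∀ (y : EuclideanSpace ℝ (Fin d)) (z : ℝ), φ (0, y, z) = z - u₀ y)
    (x : ℝ → EuclideanSpace ℝ (Fin d))
    (hmem : ∀ t ∈ Set.Icc (0 : ℝ) T, (t, x t) ∈ U)
    (hode : ∀ t ∈ Set.Icc (0 : ℝ) T, HasDerivAt x (F (u (t, x t))) t) :
    ∀ t ∈ Set.Icc (0 : ℝ) T, φ (t, x t, u (t, x t)) = 0 := by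
  have hdu : ∀ p ∈ U, DifferentiableAt ℝ u p := fun p hp =>
    hu.differentiableAt (hU.mem_nhds hp)
  have hz : ∀ t ∈ Icc 0 T, HasDerivAt (fun s => u (s, x s)) (-q (x t, u (t, x t))) t := by
    intro t ht
    have hpde_t : fderiv ℝ u (t, x t) (1, F (u (t, x t))) = -q (x t, u (t, x t)) := by
      rw [fderiv_apply_one_eq_deriv_add_inner_gradient (hdu _ (hmem t ht))]
      linarith [hpde _ (hmem t ht)]
    rw [← hpde_t]
    exact (hdu _ (hmem t ht)).hasFDerivAt.comp_hasDerivAt t ((hasDerivAt_id t).prodMk (hode t ht))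
  have hconst := eq_of_fderiv_apply_velocity_eq_zero (Φ := φ)
    (γ := fun s => (s, x s, u (s, x s)))
    (γ' := fun s => (1, F (u (s, x s)), -q (x s, u (s, x s))))
    (fun t _ => hφ _)
    (fun t ht => (hasDerivAt_id t).prodMk ((hode t ht).prodMk (hz t ht)))
    (fun t _ => by
      rw [fderiv_apply_one_eq_deriv_add_inner_gradient_add_deriv (hφ _), neg_mul]
      linarith [hls t (x t) (u (t, x t))])
  intro t ht
  rw [hconst t ht, hφ0, hinit, sub_self]

/-- The graph `z = u(t,x)` of a classical solution of the quasilinear balance law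
`∂_t u + F(u) · ∇_x u + q(x,u) = 0`, `u(0,·) = u₀`, stays inside the zero level set of
any differentiable solution `φ(t,x,z)` of the level-set transport equation
`∂_t φ + F(z) · ∇_x φ − q(x,z) ∂_z φ = 0` with initial data `φ(0,x,z) = z − u₀(x)`,
along any spatial characteristic `x'(t) = F(u(t,x(t)))`. -/
theorem statement_8 {d : ℕ}
    (F : ℝ → EuclideanSpace ℝ (Fin d)) (hF : Continuous F)
    (q : EuclideanSpace ℝ (Fin d) × ℝ → ℝ)
    (u₀ : EuclideanSpace ℝ (Fin d) → ℝ)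
    (T : ℝ) (hT : 0 < T)
    (U : Set (ℝ × EuclideanSpace ℝ (Fin d))) (hU : IsOpen U)
    (u : ℝ × EuclideanSpace ℝ (Fin d) → ℝ) (hu : DifferentiableOn ℝ u U)
    (hpde : ∀ X ∈ U,
      deriv (fun t => u (t, X.2)) X.1 +
        ⟪F (u X), gradient (fun y => u (X.1, y)) X.2⟫ + q (X.2, u X) = 0)
    (hinit : ∀ y : EuclideanSpace ℝ (Fin d), u (0, y) = u₀ y)
    (φ : ℝ × EuclideanSpace ℝ (Fin d) × ℝ → ℝ) (hφ : Differentiable ℝ φ)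
    (hls : ∀ (t : ℝ) (y : EuclideanSpace ℝ (Fin d)) (z : ℝ),
      deriv (fun t' => φ (t', y, z)) t +
          ⟪F z, gradient (fun y' => φ (t, y', z)) y⟫ -
        q (y, z) * deriv (fun z' => φ (t, y, z')) z = 0)
    (hφ0 : ∀ (y : EuclideanSpace ℝ (Fin d)) (z : ℝ), φ (0, y, z) = z - u₀ y)
    (x : ℝ → EuclideanSpace ℝ (Fin d))
    (hmem : ∀ t ∈ Set.Icc (0 : ℝ) T, (t, x t) ∈ U)
    (hode : ∀ t ∈ Set.Icc (0 : ℝ) T, HasDerivAt x (F (u (t, x t))) t) :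
    ∀ t ∈ Set.Icc (0 : ℝ) T, φ (t, x t, u (t, x t)) = 0 :=
  statement_8_general F q u₀ T U hU u hu hpde hinit φ hφ hls hφ0 x hmem hode
end
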